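/- Let λ > 0 and let h₋(t) = −2cos(2πλt) + 1_{(−λ,λ)}(t) g₋(t) − 2∫₀^λ cos(2πts) g₋(s) ds, where g₋ = g_{−1}. Define the tempered distribution B by ⟨B, χ⟩ = χ(λ) + χ(−λ) + ∫_ℝ h₋(t) χ(t) dt for Schwartz functions χ (the integral converges absolutely). Then: (i) ⟨B, ℱχ⟩ = −⟨B, χ⟩ for every Schwartz function χ (B is anti-invariant under the Fourier transform); (ii) ⟨B, χ⟩ = 0 for every Schwartz function χ with support contained in (−λ,λ); consequently also ⟨B, ℱχ⟩ = 0 for every such χ, i.e. B has the Sonine property. -/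

import Mathlib

open MeasureTheory Complex Set FourierTransform

noncomputable section

/-- `F` is the Fourier–Plancherel transform on `L²(ℝ)`: the unitary operator agreeing with
the Fourier integral `x ↦ ∫ y, exp(2πixy) f y` on integrable square-integrable functions. -/
def IsFourierPlancherel
    (F : Lp ℂ 2 (volume : Measure ℝ) ≃ₗᵢ[ℂ] Lp ℂ 2 (volume : Measure ℝ)) : Prop :=
  ∀ (f : ℝ → ℂ) (_ : Integrable f volume) (hf : MemLp f 2 volume),
    (F (hf.toLp f) : ℝ → ℂ) =ᵐ[volume] 𝓕⁻ f

/-- `P_λ` : multiplication by the indicator function of `(-λ, λ)` on `L²(ℝ)`. -/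
def Pproj (lam : ℝ) (f : Lp ℂ 2 (volume : Measure ℝ)) : Lp ℂ 2 (volume : Measure ℝ) :=
  ((Lp.memLp f).indicator (measurableSet_Ioo : MeasurableSet (Ioo (-lam) lam))).toLp _


/-- The operator `F_λ = P_λ ℱ P_λ`. -/
def Fop (lam : ℝ)
    (F : Lp ℂ 2 (volume : Measure ℝ) ≃ₗᵢ[ℂ] Lp ℂ 2 (volume : Measure ℝ))
    (f : Lp ℂ 2 (volume : Measure ℝ)) : Lp ℂ 2 (volume : Measure ℝ) :=
  Pproj lam (F (Pproj lam f))

/-- `h₋(t) = −2cos(2πλt) + 1_{(−λ,λ)}(t)g₋(t) − 2∫₀^λ cos(2πts) g₋(s) ds`. -/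
def hminus (lam : ℝ) (g : Lp ℂ 2 (volume : Measure ℝ)) : ℝ → ℂ := fun t =>
  -(2 * Real.cos (2 * Real.pi * lam * t)) + Set.indicator (Ioo (-lam) lam) (⇑g) t -
    2 * ∫ s in (0:ℝ)..lam, (Real.cos (2 * Real.pi * t * s) : ℂ) * g s

/-- The pairing `⟨B, χ⟩ = χ(λ) + χ(−λ) + ∫_ℝ h(t) χ(t) dt`. -/
def pairingB (lam : ℝ) (h : ℝ → ℂ) (χ : ℝ → ℂ) : ℂ :=
  χ lam + χ (-lam) + ∫ t : ℝ, h t * χ t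

/-!
Put `G = 1_{(-λ,λ)} g`. As `G` is even and integrable, `𝓕⁻ G t = 2 ∫₀^λ cos(2πts) g(s) ds`, so
`h₋ = -2cos(2πλ·) + G - 𝓕⁻ G`. The Fourier transform exchanges `δ_λ + δ_{-λ}` with
`2cos(2πλ·)` and, by evenness, `G` with `𝓕⁻ G`; hence
`B = (δ_λ + δ_{-λ} - 2cos(2πλ·)) + (G - 𝓕⁻ G)` is anti-invariant. On `(-λ,λ)` the density
equals `-2cos(2πλ·) + g - F_λ g`, which vanishes by the equation defining `g`, while the two
point masses sit at the endpoints; anti-invariance carries the vanishing over to `𝓕⁻ χ`.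
-/

namespace Real

variable {f k : ℝ → ℂ}

theorem integral_fourier_mul_eq (hf : Integrable f) (hk : Integrable k) :
    ∫ x, 𝓕 f x * k x = ∫ x, f x * 𝓕 k x := by
  simpa using! VectorFourier.integral_bilin_fourierIntegral_eq_flip (.mul ℂ ℂ)
    (L := innerₗ ℝ) continuous_fourierChar continuous_inner hf hk

theorem integral_fourierInv_mul_eq (hf : Integrable f) (hk : Integrable k) :
    ∫ x, 𝓕⁻ f x * k x = ∫ x, f x * 𝓕⁻ k x := by
  rw [fourierInv_eq_fourier_comp_neg f, integral_fourier_mul_eq hf.comp_neg hk,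
    ← integral_neg_eq_self]
  simp only [neg_neg, fourierInv_eq_fourier_neg]

theorem continuous_fourierInv (hf : Integrable f) : Continuous (𝓕⁻ f) := by
  rw [fourierInv_eq_fourier_comp_neg]
  exact VectorFourier.fourierIntegral_continuous continuous_fourierChar continuous_inner
    hf.comp_neg

theorem norm_fourierInv_le_integral_norm (f : ℝ → ℂ) (w : ℝ) : ‖𝓕⁻ f w‖ ≤ ∫ v, ‖f v‖ := by
  rw [fourierInv_eq_fourier_neg]
  exact VectorFourier.norm_fourierIntegral_le_integral_norm 𝐞 volume (innerₗ ℝ) f (-w)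

theorem fourierInv_apply_neg_of_even (hf : ∀ᵐ x, f (-x) = f x) (w : ℝ) :
    𝓕⁻ f (-w) = 𝓕⁻ f w := by
  change 𝓕⁻ f (LinearIsometryEquiv.neg ℝ w) = _
  rw [← fourierInv_comp_linearIsometry]
  exact fourierInv_congr_ae hf w

theorem fourierInv_add_fourierInv_neg (hf : Integrable f) (a : ℝ) :
    𝓕⁻ f a + 𝓕⁻ f (-a) = ∫ t, (2 * Real.cos (2 * π * a * t) : ℂ) * f t := by
  have hexp : ∀ c : ℝ, Integrable (fun t => Complex.exp ((2 * π * (c * t) : ℝ) * I) * f t) :=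
    fun c => hf.bdd_mul (by fun_prop) (.of_forall fun t => (norm_exp_ofReal_mul_I _).le)
  simp only [fourierInv_eq', RCLike.inner_apply, conj_trivial, smul_eq_mul]
  rw [← integral_add (hexp a) (hexp (-a))]
  congr 1 with t
  rw [ofReal_cos, two_cos]
  push_cast
  ring_nf

theorem fourierInv_fourierInv_apply (χ : SchwartzMap ℝ ℂ) (x : ℝ) : 𝓕⁻ (𝓕⁻ ⇑χ) x = χ (-x) := by
  rw [fourierInv_eq_fourier_neg, ← SchwartzMap.fourierInv_coe, ← SchwartzMap.fourier_coe,
    FourierTransform.fourier_fourierInv_eq]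

end Real

open Real

theorem integral_mul_comp_neg_of_even {G k : ℝ → ℂ} (hG : ∀ᵐ x, G (-x) = G x) :
    ∫ x, G x * k (-x) = ∫ x, G x * k x := by
  rw [← integral_neg_eq_self]
  refine integral_congr_ae ?_
  filter_upwards [hG] with x hx
  rw [hx, neg_neg]

theorem intervalIntegral.integral_neg_self_eq_two_mul_of_even {f : ℝ → ℂ} {a : ℝ}
    (hf : IntervalIntegrable f volume (-a) a) (heven : ∀ᵐ x, f (-x) = f x) :
    ∫ x in -a..a, f x = 2 * ∫ x in 0..a, f x := by
  have h0 : (0 : ℝ) ∈ uIcc (-a) a := by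
    rcases le_total 0 a with ha | ha
    · exact Set.mem_uIcc.2 (Or.inl ⟨by linarith, ha⟩)
    · exact Set.mem_uIcc.2 (Or.inr ⟨ha, by linarith⟩)
  have hleft : ∫ x in -a..0, f x = ∫ x in 0..a, f x := by
    rw [← neg_zero, ← intervalIntegral.integral_comp_neg, neg_zero]
    refine intervalIntegral.integral_congr_ae ?_
    filter_upwards [heven] with x hx _ using hx
  rw [← intervalIntegral.integral_add_adjacent_intervals (hf.mono_set (uIcc_subset_uIcc_left h0))
    (hf.mono_set (uIcc_subset_uIcc_right h0)), hleft, two_mul]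

theorem MeasureTheory.MemLp.integrableOn_Ioo {E : Type*} [NormedAddCommGroup E] {f : ℝ → E}
    {p : ENNReal} (hf : MemLp f p) (hp : 1 ≤ p) (a b : ℝ) : IntegrableOn f (Ioo a b) :=
  ((hf.locallyIntegrable hp).integrableOn_isCompact isCompact_Icc).mono_set Ioo_subset_Icc_self

theorem indicator_Ioo_apply_neg_of_even {g : ℝ → ℂ} (hg : ∀ᵐ x, g (-x) = g x) (a : ℝ) :
    ∀ᵐ x, (Ioo (-a) a).indicator g (-x) = (Ioo (-a) a).indicator g x := by
  filter_upwards [hg] with x hx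
  rw [← Set.indicator_comp_right (fun y : ℝ => -y)]
  change (-Ioo (-a) a).indicator (fun y => g (-y)) x = _
  simp only [Set.neg_Ioo, neg_neg, Set.indicator_apply, hx]

theorem fourierInv_indicator_Ioo_of_even {g : ℝ → ℂ} {a : ℝ} (ha : 0 ≤ a)
    (hg : IntegrableOn g (Ioo (-a) a)) (heven : ∀ᵐ x, g (-x) = g x) (t : ℝ) :
    𝓕⁻ ((Ioo (-a) a).indicator g) t =
      2 * ∫ s in 0..a, (Real.cos (2 * π * t * s) : ℂ) * g s := by
  set c : ℝ → ℂ := fun s => Real.cos (2 * π * t * s)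
  have hc_even : ∀ᵐ s, c (-s) * g (-s) = c s * g s := by
    filter_upwards [heven] with s hs
    simp only [c, hs, mul_neg, Real.cos_neg]
  have hcg : IntervalIntegrable (fun s => c s * g s) volume (-a) a := by
    rw [intervalIntegrable_iff_integrableOn_Ioo_of_le (by linarith)]
    refine hg.bdd_mul (c := 1) (by fun_prop) (.of_forall fun s => ?_)
    simpa only [c, Complex.norm_real, Real.norm_eq_abs] using Real.abs_cos_le_one _
  have hG : Integrable ((Ioo (-a) a).indicator g) := hg.integrable_indicator measurableSet_Ioo
  refine mul_left_cancel₀ (two_ne_zero' ℂ) ?_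
  calc 2 * 𝓕⁻ ((Ioo (-a) a).indicator g) t
      = 𝓕⁻ ((Ioo (-a) a).indicator g) t + 𝓕⁻ ((Ioo (-a) a).indicator g) (-t) := by
        rw [fourierInv_apply_neg_of_even (indicator_Ioo_apply_neg_of_even heven a), two_mul]
    _ = ∫ s, 2 * ((Ioo (-a) a).indicator (fun s => c s * g s) s) := by
        rw [fourierInv_add_fourierInv_neg hG]
        simp only [c, Set.indicator_mul_right, mul_assoc]
    _ = 2 * ∫ s in -a..a, c s * g s := by
        rw [integral_const_mul, integral_indicator measurableSet_Ioo,
          intervalIntegral.integral_of_le (by linarith), integral_Ioc_eq_integral_Ioo]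
    _ = 2 * (2 * ∫ s in 0..a, c s * g s) := by
        rw [intervalIntegral.integral_neg_self_eq_two_mul_of_even hcg hc_even]

def antiInvariantDensity (a : ℝ) (G : ℝ → ℂ) (t : ℝ) : ℂ :=
  -(2 * Real.cos (2 * π * a * t)) + G t - 𝓕⁻ G t

section antiInvariantDensity

variable {G k : ℝ → ℂ}

theorem integrable_two_cos_mul (a : ℝ) (hk : Integrable k) :
    Integrable (fun t => (2 * Real.cos (2 * π * a * t) : ℂ) * k t) := by
  refine hk.bdd_mul (c := 2) (by fun_prop) (.of_forall fun t => ?_)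
  rw [norm_mul, Complex.norm_real, Real.norm_eq_abs, Complex.norm_two]
  exact mul_le_of_le_one_right zero_le_two (abs_cos_le_one _)

theorem MeasureTheory.Integrable.mul_schwartzMap (hG : Integrable G) (χ : SchwartzMap ℝ ℂ) :
    Integrable (fun t => G t * χ t) :=
  hG.mul_bdd χ.continuous.aestronglyMeasurable (.of_forall (SchwartzMap.norm_le_seminorm ℝ χ))

theorem integrable_fourierInv_mul (hG : Integrable G) (hk : Integrable k) :
    Integrable (fun t => 𝓕⁻ G t * k t) :=
  hk.bdd_mul (continuous_fourierInv hG).aestronglyMeasurable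
    (.of_forall (norm_fourierInv_le_integral_norm G))

theorem integrable_antiInvariantDensity_mul (a : ℝ) (hG : Integrable G) (χ : SchwartzMap ℝ ℂ) :
    Integrable (fun t => antiInvariantDensity a G t * χ t) := by
  simp only [antiInvariantDensity, sub_mul, add_mul, neg_mul]
  exact ((integrable_two_cos_mul a χ.integrable).neg.add (hG.mul_schwartzMap χ)).sub
    (integrable_fourierInv_mul hG χ.integrable)

theorem integral_antiInvariantDensity_mul (a : ℝ) (hG : Integrable G) (χ : SchwartzMap ℝ ℂ) :
    ∫ t, antiInvariantDensity a G t * χ t =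
      -(∫ t, (2 * Real.cos (2 * π * a * t) : ℂ) * χ t) + (∫ t, G t * χ t) -
        ∫ t, 𝓕⁻ G t * χ t := by
  have hcos := integrable_two_cos_mul a χ.integrable
  have hGχ := hG.mul_schwartzMap χ
  simp only [antiInvariantDensity, sub_mul, add_mul, neg_mul]
  rw [integral_sub (hcos.fun_neg.fun_add hGχ) (integrable_fourierInv_mul hG χ.integrable),
    integral_add hcos.fun_neg hGχ, integral_neg]

theorem pairingB_antiInvariantDensity_fourierInv (a : ℝ) (hG : Integrable G)
    (hG_even : ∀ᵐ x, G (-x) = G x) (χ : SchwartzMap ℝ ℂ) :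
    pairingB a (antiInvariantDensity a G) (𝓕⁻ ⇑χ) = -pairingB a (antiInvariantDensity a G) χ := by
  rw [← SchwartzMap.fourierInv_coe]
  set ψ := 𝓕⁻ χ
  have hψψ : ∀ x, 𝓕⁻ ⇑ψ x = χ (-x) := by
    simpa only [ψ, SchwartzMap.fourierInv_coe] using fourierInv_fourierInv_apply χ
  have hδ_cos : ψ a + ψ (-a) = ∫ t, (2 * Real.cos (2 * π * a * t) : ℂ) * χ t := by
    simpa only [ψ, SchwartzMap.fourierInv_coe] using fourierInv_add_fourierInv_neg χ.integrable a
  have hcos_δ : ∫ t, (2 * Real.cos (2 * π * a * t) : ℂ) * ψ t = χ a + χ (-a) := by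
    rw [← fourierInv_add_fourierInv_neg ψ.integrable, hψψ, hψψ, neg_neg, add_comm]
  have hG_ψ : ∫ t, G t * ψ t = ∫ t, 𝓕⁻ G t * χ t := by
    simpa only [ψ, SchwartzMap.fourierInv_coe] using
      (integral_fourierInv_mul_eq hG χ.integrable).symm
  have hFG_ψ : ∫ t, 𝓕⁻ G t * ψ t = ∫ t, G t * χ t := by
    rw [integral_fourierInv_mul_eq hG ψ.integrable]
    simp only [hψψ]
    exact integral_mul_comp_neg_of_even hG_even
  simp only [pairingB]
  rw [integral_antiInvariantDensity_mul a hG ψ, integral_antiInvariantDensity_mul a hG χ]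
  linear_combination hδ_cos - hcos_δ + hG_ψ - hFG_ψ

end antiInvariantDensity

theorem pairingB_eq_zero_of_tsupport_subset {a : ℝ} {h χ : ℝ → ℂ}
    (hh : ∀ᵐ t, t ∈ Ioo (-a) a → h t = 0) (hχ : tsupport χ ⊆ Ioo (-a) a) :
    pairingB a h χ = 0 := by
  have hχ_out : ∀ t ∉ Ioo (-a) a, χ t = 0 :=
    fun t ht => image_eq_zero_of_notMem_tsupport (fun h' => ht (hχ h'))
  have hhχ : (fun t => h t * χ t) =ᵐ[volume] fun _ => 0 := by
    filter_upwards [hh] with t ht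
    by_cases hmem : t ∈ Ioo (-a) a
    · rw [ht hmem, zero_mul]
    · rw [hχ_out t hmem, mul_zero]
  rw [pairingB, hχ_out a (fun h' => lt_irrefl a h'.2), hχ_out (-a) (fun h' => lt_irrefl _ h'.1),
    integral_congr_ae hhχ, integral_zero, add_zero, add_zero]

section Sonine

variable {lam : ℝ} {F : Lp ℂ 2 (volume : Measure ℝ) ≃ₗᵢ[ℂ] Lp ℂ 2 (volume : Measure ℝ)}
  {g : Lp ℂ 2 (volume : Measure ℝ)}

theorem Fop_ae_eq_indicator_fourierInv (hF : IsFourierPlancherel F) :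
    Fop lam F g =ᵐ[volume] (Ioo (-lam) lam).indicator (𝓕⁻ ((Ioo (-lam) lam).indicator g)) := by
  have hPF : F (Pproj lam g) =ᵐ[volume] 𝓕⁻ ((Ioo (-lam) lam).indicator g) :=
    hF _ (((Lp.memLp g).integrableOn_Ioo one_le_two _ _).integrable_indicator measurableSet_Ioo) _
  have hFop : Fop lam F g =ᵐ[volume] (Ioo (-lam) lam).indicator (F (Pproj lam g)) := by
    unfold Fop Pproj
    exact MemLp.coeFn_toLp _
  filter_upwards [hFop, hPF] with t hFop_t hPF_t
  simp only [hFop_t, Set.indicator_apply, hPF_t]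

theorem antiInvariantDensity_ae_eq_zero_on_Ioo (hF : IsFourierPlancherel F)
    (hg : ∀ᵐ t : ℝ, g t - (Fop lam F g) t =
      Set.indicator (Ioo (-lam) lam) (fun s : ℝ => (2 * Real.cos (2 * π * lam * s) : ℂ)) t) :
    ∀ᵐ t, t ∈ Ioo (-lam) lam →
      antiInvariantDensity lam ((Ioo (-lam) lam).indicator g) t = 0 := by
  filter_upwards [hg, Fop_ae_eq_indicator_fourierInv hF] with t ht hFt hmem
  rw [Set.indicator_of_mem hmem, hFt, Set.indicator_of_mem hmem] at ht
  rw [antiInvariantDensity, Set.indicator_of_mem hmem, ← ht]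
  ring

theorem hminus_eq_antiInvariantDensity (hlam : 0 < lam) (hge : ∀ᵐ x : ℝ, g (-x) = g x) :
    hminus lam g = antiInvariantDensity lam ((Ioo (-lam) lam).indicator g) := by
  funext t
  rw [hminus, antiInvariantDensity, fourierInv_indicator_Ioo_of_even hlam.le
    ((Lp.memLp g).integrableOn_Ioo one_le_two _ _) hge]

end Sonine

theorem Blambda_sonine_general (lam : ℝ) (hlam : 0 < lam)
    (F : Lp ℂ 2 (volume : Measure ℝ) ≃ₗᵢ[ℂ] Lp ℂ 2 (volume : Measure ℝ))
    (hF : IsFourierPlancherel F)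
    (g : Lp ℂ 2 (volume : Measure ℝ))
    (hge : ∀ᵐ x : ℝ, g (-x) = g x)
    (hg : ∀ᵐ t : ℝ, g t - (Fop lam F g) t =
      Set.indicator (Ioo (-lam) lam)
        (fun s : ℝ => (2 * Real.cos (2 * Real.pi * lam * s) : ℂ)) t) :
    (∀ χ : SchwartzMap ℝ ℂ, Integrable (fun t : ℝ => hminus lam g t * χ t) volume) ∧
    (∀ χ : SchwartzMap ℝ ℂ,
      pairingB lam (hminus lam g) (𝓕⁻ (χ : ℝ → ℂ)) =
        -pairingB lam (hminus lam g) (χ : ℝ → ℂ)) ∧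
    (∀ χ : SchwartzMap ℝ ℂ, tsupport (χ : ℝ → ℂ) ⊆ Ioo (-lam) lam →
      pairingB lam (hminus lam g) (χ : ℝ → ℂ) = 0 ∧
      pairingB lam (hminus lam g) (𝓕⁻ (χ : ℝ → ℂ)) = 0) := by
  have hG : Integrable ((Ioo (-lam) lam).indicator g) :=
    ((Lp.memLp g).integrableOn_Ioo one_le_two _ _).integrable_indicator measurableSet_Ioo
  have hG_even := indicator_Ioo_apply_neg_of_even hge lam
  rw [hminus_eq_antiInvariantDensity hlam hge]
  have hanti := pairingB_antiInvariantDensity_fourierInv lam hG hG_even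
  refine ⟨integrable_antiInvariantDensity_mul lam hG, hanti, fun χ hχ => ?_⟩
  have hzero :=
    pairingB_eq_zero_of_tsupport_subset (antiInvariantDensity_ae_eq_zero_on_Ioo hF hg) hχ
  exact ⟨hzero, by rw [hanti, hzero, neg_zero]⟩

/-- The distribution `B = δ_λ + δ_{−λ} + h₋` is Fourier anti-invariant and has the
Sonine property: it vanishes, together with its Fourier transform, on `(−λ,λ)`. -/
theorem Blambda_sonine (lam : ℝ) (hlam : 0 < lam)
    (F : Lp ℂ 2 (volume : Measure ℝ) ≃ₗᵢ[ℂ] Lp ℂ 2 (volume : Measure ℝ))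
    (hF : IsFourierPlancherel F)
    (g : Lp ℂ 2 (volume : Measure ℝ))
    (hge : ∀ᵐ x : ℝ, g (-x) = g x)
    (hgs : ∀ᵐ x : ℝ, x ∉ Ioo (-lam) lam → g x = 0)
    (hg : ∀ᵐ t : ℝ, g t - (Fop lam F g) t =
      Set.indicator (Ioo (-lam) lam)
        (fun s : ℝ => (2 * Real.cos (2 * Real.pi * lam * s) : ℂ)) t) :
    (∀ χ : SchwartzMap ℝ ℂ, Integrable (fun t : ℝ => hminus lam g t * χ t) volume) ∧
    (∀ χ : SchwartzMap ℝ ℂ,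
      pairingB lam (hminus lam g) (𝓕⁻ (χ : ℝ → ℂ)) =
        -pairingB lam (hminus lam g) (χ : ℝ → ℂ)) ∧
    (∀ χ : SchwartzMap ℝ ℂ, tsupport (χ : ℝ → ℂ) ⊆ Ioo (-lam) lam →
      pairingB lam (hminus lam g) (χ : ℝ → ℂ) = 0 ∧
      pairingB lam (hminus lam g) (𝓕⁻ (χ : ℝ → ℂ)) = 0) :=
  Blambda_sonine_general lam hlam F hF g hge hg
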